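/- Consider $n$ users, and for each user $i$ suppose the Cesàro limits $L_i$ (loss-of-load rate), $C_i$ (net contribution) and $\Delta_i$ (drift) exist, with feasibility constraints (if $x_{i,t}>0$ then $0\le a_{i,t}\le x_{i,t}$; if $x_{i,t}\le 0$ then $x_{i,t}\le a_{i,t}\le 0$) and fairness constraints $C_i \ge 0$ for all $i$. Then the total loss-of-load rate satisfies $\sum_{i=1}^n L_i \ge \sum_{i \in \mathscr{D}} (-\Delta_i)$, where $\mathscr{D} = \{i : \Delta_i < 0\}$ is the set of net-demanding users. -/

import Mathlib

open Filter

/-!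
Feasibility makes the per-step loss of load dominate `a - x`: when `x < 0` they agree, and when
`x ≥ 0` the action satisfies `a ≤ x`. Taking Cesàro limits gives `L_i ≥ C_i - Δ_i ≥ -Δ_i` by
fairness, and `L_i ≥ 0` lets us discard the users with `Δ_i ≥ 0`.
-/

open Finset

theorem le_of_tendsto_cesaro_of_le {u v : ℕ → ℝ} {A B : ℝ} (huv : ∀ t, u t ≤ v t)
    (hu : Tendsto (fun T : ℕ => (∑ t ∈ range T, u t) / T) atTop (nhds A))
    (hv : Tendsto (fun T : ℕ => (∑ t ∈ range T, v t) / T) atTop (nhds B)) : A ≤ B :=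
  le_of_tendsto_of_tendsto' hu hv fun T =>
    div_le_div_of_nonneg_right (sum_le_sum fun t _ => huv t) T.cast_nonneg

theorem tendsto_cesaro_sub {u v : ℕ → ℝ} {A B : ℝ}
    (hu : Tendsto (fun T : ℕ => (∑ t ∈ range T, u t) / T) atTop (nhds A))
    (hv : Tendsto (fun T : ℕ => (∑ t ∈ range T, v t) / T) atTop (nhds B)) :
    Tendsto (fun T : ℕ => (∑ t ∈ range T, (u t - v t)) / T) atTop (nhds (A - B)) := by
  simpa only [sum_sub_distrib, sub_div] using hu.sub hv

def IsFeasibleAction (x a : ℝ) : Prop :=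
  (x > 0 → 0 ≤ a ∧ a ≤ x) ∧ (x ≤ 0 → x ≤ a ∧ a ≤ 0)

noncomputable def lossOfLoad (x a : ℝ) : ℝ :=
  if x < 0 then a - x else 0

section Feasible

variable {x a : ℝ}

theorem IsFeasibleAction.sub_le_lossOfLoad (h : IsFeasibleAction x a) :
    a - x ≤ lossOfLoad x a := by
  unfold lossOfLoad
  split_ifs with hneg
  · exact le_rfl
  · rcases (not_lt.mp hneg).lt_or_eq with hpos | hzero
    · linarith [(h.1 hpos).2]
    · linarith [(h.2 hzero.ge).2]

theorem IsFeasibleAction.lossOfLoad_nonneg (h : IsFeasibleAction x a) : 0 ≤ lossOfLoad x a := by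
  unfold lossOfLoad
  split_ifs with hneg
  · linarith [(h.2 hneg.le).1]
  · exact le_rfl

end Feasible

section User

variable {x a : ℕ → ℝ} {L C Δ : ℝ}

theorem sub_le_lossOfLoadRate (hfeas : ∀ t, IsFeasibleAction (x t) (a t))
    (hL : Tendsto (fun T : ℕ => (∑ t ∈ range T, lossOfLoad (x t) (a t)) / T) atTop (nhds L))
    (hC : Tendsto (fun T : ℕ => (∑ t ∈ range T, a t) / T) atTop (nhds C))
    (hΔ : Tendsto (fun T : ℕ => (∑ t ∈ range T, x t) / T) atTop (nhds Δ)) : C - Δ ≤ L :=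
  le_of_tendsto_cesaro_of_le (fun t => (hfeas t).sub_le_lossOfLoad) (tendsto_cesaro_sub hC hΔ) hL

theorem lossOfLoadRate_nonneg (hfeas : ∀ t, IsFeasibleAction (x t) (a t))
    (hL : Tendsto (fun T : ℕ => (∑ t ∈ range T, lossOfLoad (x t) (a t)) / T) atTop (nhds L)) :
    0 ≤ L :=
  le_of_tendsto_cesaro_of_le (fun t => (hfeas t).lossOfLoad_nonneg) (by simp) hL

end User

theorem stmt2 (n : ℕ) (x a : Fin n → ℕ → ℝ) (L C Δ : Fin n → ℝ)
    (hfeas : ∀ i t, (x i t > 0 → 0 ≤ a i t ∧ a i t ≤ x i t) ∧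
      (x i t ≤ 0 → x i t ≤ a i t ∧ a i t ≤ 0))
    (hL : ∀ i, Tendsto
      (fun T : ℕ => (∑ t ∈ Finset.range T, (if x i t < 0 then a i t - x i t else 0)) / T)
      atTop (nhds (L i)))
    (hC : ∀ i, Tendsto (fun T : ℕ => (∑ t ∈ Finset.range T, a i t) / T) atTop (nhds (C i)))
    (hΔ : ∀ i, Tendsto (fun T : ℕ => (∑ t ∈ Finset.range T, x i t) / T) atTop (nhds (Δ i)))
    (hfair : ∀ i, C i ≥ 0) :
    ∑ i, L i ≥ ∑ i ∈ Finset.univ.filter (fun i => Δ i < 0), (-Δ i) := by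
  have hgap (i : Fin n) : C i - Δ i ≤ L i := sub_le_lossOfLoadRate (hfeas i) (hL i) (hC i) (hΔ i)
  calc ∑ i ∈ univ.filter (fun i => Δ i < 0), -Δ i
      ≤ ∑ i ∈ univ.filter (fun i => Δ i < 0), L i :=
        sum_le_sum fun i _ => by linarith [hgap i, hfair i]
    _ ≤ ∑ i, L i := sum_le_sum_of_subset_of_nonneg (filter_subset _ _)
        fun i _ _ => lossOfLoadRate_nonneg (hfeas i) (hL i)
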